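/- The Ward numbers W(n,k), equal to the associated Stirling subset numbers {n+k over k}_{≥2} (counting partitions of an (n+k)-set into k blocks each of size at least 2), satisfy {n+k over k}_{≥2} = ∑_{j=0}^{k} B(n,j)·C(n-j, n-k), where B(n,k) are the second-order Eulerian numbers with traditional indexing. -/

import Mathlib

/-
Write `W(n, k) = {n + k over k}_{≥2}`. Classify a partition of `s ∋ a` into `k + 1` blocks by the
block `c` containing `a`; removing `c` leaves a partition of `s \ c` into `k` blocks. Blocks
`c = {a, y}` contribute `(|s| - 1) {|s| - 2 over k}_{≥2}`. A larger block `c` is the block `c \ {a}`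
of a partition of `s \ {a}` into `k + 1` blocks, so double counting (partition, block) pairs shows
that these contribute `(k + 1) {|s| - 1 over k + 1}_{≥2}`. Hence
`W(n + 1, k + 1) = (k + 1) W(n, k + 1) + (n + k + 1) W(n, k)`.

The recurrence of `B` turns `∑_j B(n + 1, j) g(j)` into
`∑_j B(n, j) (j g(j) + (2n + 1 - j) g(j + 1))`. For `g(j) = C(n + 1 - j, n - k)`, Pascal's rule
and `(e + 1) C(m, e + 1) = (m - e) C(m, e)` show that `∑_j B(n, j) C(n - j, n - k)` satisfies the
same recurrence and initial values.
-/

/-- The associated Stirling subset number `{m over k}_{≥2}`: the number of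
partitions of an `m`-element set into `k` blocks, each of size at least 2. -/
noncomputable def assocStirling (m k : ℕ) : ℕ :=
  Nat.card {P : Finpartition (Finset.univ : Finset (Fin m)) //
    P.parts.card = k ∧ ∀ p ∈ P.parts, 2 ≤ p.card}

open Finset

namespace Finpartition

section GeneralizedBooleanAlgebra

variable {α : Type*} [GeneralizedBooleanAlgebra α] [DecidableEq α] {a b : α}

theorem parts_avoid_of_mem (P : Finpartition a) (hb : b ∈ P.parts) :
    (P.avoid b).parts = P.parts.erase b := by
  ext c
  rw [mem_avoid, mem_erase]
  constructor
  · rintro ⟨d, hd, hdb, rfl⟩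
    have hne : d ≠ b := by rintro rfl; exact hdb le_rfl
    have hdisj : Disjoint d b := P.disjoint hd hb hne
    rw [hdisj.sdiff_eq_left]
    exact ⟨hne, hd⟩
  · rintro ⟨hne, hc⟩
    have hdisj : Disjoint c b := P.disjoint hc hb hne
    exact ⟨c, hc, fun hle ↦ P.ne_bot hc (hdisj.eq_bot_of_le hle), hdisj.sdiff_eq_left⟩

theorem extend_avoid (P : Finpartition a) (hb : b ∈ P.parts) :
    (P.avoid b).extend (P.ne_bot hb) disjoint_sdiff_self_left (sdiff_sup_cancel (P.le hb)) = P := by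
  ext : 1
  rw [extend_parts, parts_avoid_of_mem P hb, insert_erase hb]

theorem avoid_extend (Q : Finpartition (a \ b)) (hb : b ≠ ⊥) (hba : b ≤ a) :
    (Q.extend hb disjoint_sdiff_self_left (sdiff_sup_cancel hba)).avoid b = Q := by
  have hbQ : b ∉ Q.parts := fun h ↦ hb (disjoint_sdiff_self_left.symm.eq_bot_of_le (Q.le h))
  ext : 1
  rw [parts_avoid_of_mem _ (by rw [extend_parts]; exact mem_insert_self _ _), extend_parts,
    erase_insert hbQ]

end GeneralizedBooleanAlgebra

end Finpartition

section Partitions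

variable {α : Type*} [DecidableEq α]

def assocPartitions (s : Finset α) (k : ℕ) : Finset (Finpartition s) :=
  {P | #P.parts = k ∧ ∀ p ∈ P.parts, 2 ≤ #p}

theorem mem_assocPartitions {s : Finset α} {k : ℕ} {P : Finpartition s} :
    P ∈ assocPartitions s k ↔ #P.parts = k ∧ ∀ p ∈ P.parts, 2 ≤ #p := by
  simp [assocPartitions]

theorem assocStirling_eq_card_assocPartitions (m k : ℕ) :
    assocStirling m k = #(assocPartitions (univ : Finset (Fin m)) k) := by
  rw [assocStirling, Nat.card_eq_fintype_card, Fintype.card_subtype, assocPartitions]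
  convert rfl

theorem assocPartitions_eq_empty_of_lt {s : Finset α} {k : ℕ} (h : #s < 2 * k) :
    assocPartitions s k = ∅ := by
  refine eq_empty_of_forall_notMem fun P hP ↦ ?_
  obtain ⟨hcard, htwo⟩ := mem_assocPartitions.1 hP
  have := card_nsmul_le_sum P.parts card 2 htwo
  rw [hcard, P.sum_card_parts, smul_eq_mul] at this
  omega

theorem assocPartitions_zero_of_nonempty {s : Finset α} (hs : s.Nonempty) :
    assocPartitions s 0 = ∅ := by
  refine eq_empty_of_forall_notMem fun P hP ↦ ?_
  rw [mem_assocPartitions, card_eq_zero, Finpartition.parts_eq_empty_iff] at hP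
  exact hs.ne_empty hP.1

theorem card_assocPartitions_empty_zero : #(assocPartitions (∅ : Finset α) 0) = 1 := by
  have : Unique (Finpartition (∅ : Finset α)) := inferInstanceAs (Unique (Finpartition ⊥))
  have hparts : (default : Finpartition (∅ : Finset α)).parts = ∅ :=
    Finpartition.parts_eq_empty_iff.2 rfl
  refine card_eq_one.2
    ⟨default, eq_singleton_iff_unique_mem.2 ⟨?_, fun P _ ↦ Subsingleton.elim _ _⟩⟩
  simp [mem_assocPartitions, hparts]

theorem card_filter_mem_parts_assocPartitions {s b : Finset α} (hbs : b ⊆ s) (hb : 2 ≤ #b)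
    (k : ℕ) : #{P ∈ assocPartitions s (k + 1) | b ∈ P.parts} = #(assocPartitions (s \ b) k) := by
  have hb₀ : b ≠ ⊥ := by rintro rfl; simp at hb
  refine card_nbij' (·.avoid b) (·.extend hb₀ disjoint_sdiff_self_left (sdiff_sup_cancel hbs))
    ?_ ?_ ?_ ?_
  · intro P hP
    obtain ⟨hP, hbP⟩ := mem_filter.1 hP
    obtain ⟨hcard, htwo⟩ := mem_assocPartitions.1 hP
    refine mem_assocPartitions.2 ⟨?_, fun p hp ↦ ?_⟩
    · rw [P.parts_avoid_of_mem hbP, card_erase_of_mem hbP, hcard, add_tsub_cancel_right]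
    · rw [P.parts_avoid_of_mem hbP] at hp
      exact htwo p (mem_of_mem_erase hp)
  · intro Q hQ
    obtain ⟨hcard, htwo⟩ := mem_assocPartitions.1 hQ
    refine mem_filter.2 ⟨mem_assocPartitions.2 ⟨?_, ?_⟩, ?_⟩
    · rw [Finpartition.card_extend, hcard]
    · rw [Finpartition.extend_parts, forall_mem_insert]
      exact ⟨hb, htwo⟩
    · rw [Finpartition.extend_parts]
      exact mem_insert_self _ _
  · intro P hP
    exact P.extend_avoid (mem_filter.1 hP).2
  · intro Q _
    exact Q.avoid_extend hb₀ hbs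

theorem card_assocPartitions_succ_eq_sum {s : Finset α} {a : α} (ha : a ∈ s) (k : ℕ) :
    #(assocPartitions s (k + 1)) =
      ∑ c ∈ s.powerset with a ∈ c ∧ 2 ≤ #c, #(assocPartitions (s \ c) k) := by
  rw [card_eq_sum_card_fiberwise (f := fun P ↦ P.part a)]
  · refine sum_congr rfl fun c hc ↦ ?_
    simp only [mem_filter, mem_powerset] at hc
    rw [← card_filter_mem_parts_assocPartitions hc.1 hc.2.2]
    congr 1
    exact filter_congr fun P _ ↦
      ⟨fun h ↦ h ▸ P.part_mem.2 ha, fun h ↦ (P.part_eq_iff_mem h).2 hc.2.1⟩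
  · intro P hP
    simp only [mem_coe, mem_assocPartitions] at hP
    simp only [coe_filter, mem_powerset]
    exact ⟨P.part_subset a, P.mem_part_self.2 ha, hP.2 _ (P.part_mem.2 ha)⟩

theorem sum_card_assocPartitions_sdiff (t : Finset α) (k : ℕ) :
    ∑ d ∈ t.powerset with 2 ≤ #d, #(assocPartitions (t \ d) k) =
      (k + 1) * #(assocPartitions t (k + 1)) := by
  calc ∑ d ∈ t.powerset with 2 ≤ #d, #(assocPartitions (t \ d) k)
      = ∑ d ∈ t.powerset with 2 ≤ #d, #{P ∈ assocPartitions t (k + 1) | d ∈ P.parts} := by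
        refine sum_congr rfl fun d hd ↦ ?_
        simp only [mem_filter, mem_powerset] at hd
        rw [card_filter_mem_parts_assocPartitions hd.1 hd.2]
    _ = ∑ P ∈ assocPartitions t (k + 1), #({d ∈ t.powerset | 2 ≤ #d}.filter (· ∈ P.parts)) :=
        sum_card_bipartiteAbove_eq_sum_card_bipartiteBelow (s := {d ∈ t.powerset | 2 ≤ #d})
          (t := assocPartitions t (k + 1)) (fun d P ↦ d ∈ P.parts)
    _ = ∑ P ∈ assocPartitions t (k + 1), (k + 1) := by
        refine sum_congr rfl fun P hP ↦ ?_
        obtain ⟨hcard, htwo⟩ := mem_assocPartitions.1 hP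
        rw [← hcard]
        congr 1
        ext d
        simp only [mem_filter, mem_powerset]
        exact ⟨fun h ↦ h.2, fun h ↦ ⟨⟨P.le h, htwo d h⟩, h⟩⟩
    _ = (k + 1) * #(assocPartitions t (k + 1)) := by rw [sum_const, smul_eq_mul, mul_comm]

theorem sum_powerset_filter_mem_card_eq_two {M : Type*} [AddCommMonoid M] {s : Finset α} {a : α}
    (ha : a ∈ s) (f : Finset α → M) :
    ∑ c ∈ s.powerset with a ∈ c ∧ #c = 2, f c = ∑ y ∈ s.erase a, f {a, y} := by
  symm
  refine sum_nbij (fun y ↦ {a, y}) ?_ ?_ ?_ fun _ _ ↦ rfl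
  · intro y hy
    obtain ⟨hya, hys⟩ := mem_erase.1 hy
    simp only [mem_filter, mem_powerset, mem_insert_self, card_pair (Ne.symm hya), and_true]
    exact insert_subset ha (singleton_subset_iff.2 hys)
  · intro y hy y' _ h
    have h : ({a, y} : Finset α) = {a, y'} := h
    have : y ∈ ({a, y'} : Finset α) := h ▸ mem_insert_of_mem (mem_singleton_self y)
    simpa [(mem_erase.1 hy).1] using this
  · intro c hc
    simp only [coe_filter, mem_powerset] at hc
    obtain ⟨hcs, hac, hc2⟩ := hc
    obtain ⟨y, hy⟩ := card_eq_one.1 (show #(c.erase a) = 1 by rw [card_erase_of_mem hac, hc2])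
    have hyc : y ∈ c.erase a := hy ▸ mem_singleton_self y
    refine ⟨y, mem_erase.2 ⟨(mem_erase.1 hyc).1, hcs (mem_of_mem_erase hyc)⟩, ?_⟩
    change {a, y} = c
    rw [← insert_erase hac, hy]

theorem sum_powerset_filter_mem_three_le_card {M : Type*} [AddCommMonoid M] {s : Finset α} {a : α}
    (ha : a ∈ s) (f : Finset α → M) :
    ∑ c ∈ s.powerset with a ∈ c ∧ 3 ≤ #c, f (s \ c) =
      ∑ d ∈ (s.erase a).powerset with 2 ≤ #d, f (s.erase a \ d) := by
  refine sum_nbij' (·.erase a) (insert a) ?_ ?_ ?_ ?_ ?_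
  · intro c hc
    simp only [mem_filter, mem_powerset] at hc ⊢
    rw [card_erase_of_mem hc.2.1]
    exact ⟨erase_subset_erase a hc.1, by omega⟩
  · intro d hd
    simp only [mem_filter, mem_powerset, subset_erase] at hd ⊢
    rw [card_insert_of_notMem hd.1.2]
    exact ⟨insert_subset ha hd.1.1, mem_insert_self a d, by omega⟩
  · intro c hc
    exact insert_erase (mem_filter.1 hc).2.1
  · intro d hd
    exact erase_insert (subset_erase.1 (mem_powerset.1 (mem_filter.1 hd).1)).2
  · intro c hc
    have hac := (mem_filter.1 hc).2.1
    have hsdiff : s \ c = s.erase a \ c.erase a := by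
      ext x
      by_cases hx : x = a <;> simp [hx, hac]
    rw [hsdiff]

theorem card_assocPartitions_succ {s : Finset α} {a : α} (ha : a ∈ s) (k : ℕ) :
    #(assocPartitions s (k + 1)) = (k + 1) * #(assocPartitions (s.erase a) (k + 1)) +
      ∑ y ∈ s.erase a, #(assocPartitions (s \ {a, y}) k) := by
  have hsplit : ∀ c ∈ s.powerset, (a ∈ c ∧ 2 ≤ #c ↔ a ∈ c ∧ 3 ≤ #c ∨ a ∈ c ∧ #c = 2) :=
    fun c _ ↦ by
      rw [← and_or_left]
      exact and_congr_right fun _ ↦ ⟨fun h ↦ by omega, fun h ↦ by omega⟩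
  rw [card_assocPartitions_succ_eq_sum ha, filter_congr hsplit, filter_or, sum_union,
    sum_powerset_filter_mem_three_le_card ha fun t ↦ #(assocPartitions t k),
    sum_card_assocPartitions_sdiff, sum_powerset_filter_mem_card_eq_two ha]
  exact disjoint_filter.2 fun _ _ ⟨_, h₁⟩ ⟨_, h₂⟩ ↦ by omega

def assocStirlingRec : ℕ → ℕ → ℕ
  | 0, 0 => 1
  | 0, _ + 1 => 0
  | _ + 1, 0 => 0
  | 1, _ + 1 => 0
  | m + 2, k + 1 => (k + 1) * assocStirlingRec (m + 1) (k + 1) + (m + 1) * assocStirlingRec m k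

theorem assocStirlingRec_eq_zero_of_lt {m k : ℕ} (h : m < 2 * k) : assocStirlingRec m k = 0 := by
  induction m, k using assocStirlingRec.induct with
  | case1 => omega
  | case5 m k ih₁ ih₂ => rw [assocStirlingRec, ih₁ (by omega), ih₂ (by omega)]; simp
  | _ => rfl

theorem card_assocPartitions (s : Finset α) (k : ℕ) :
    #(assocPartitions s k) = assocStirlingRec #s k := by
  induction hs : #s using Nat.strong_induction_on generalizing s k with
  | _ m ih =>
  match m, k with
  | 0, 0 => rw [card_eq_zero.1 hs, card_assocPartitions_empty_zero]; rfl
  | 0, k + 1 | 1, k + 1 => rw [assocPartitions_eq_empty_of_lt (by omega)]; rfl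
  | m + 1, 0 => rw [assocPartitions_zero_of_nonempty (card_pos.1 (by omega))]; rfl
  | m + 2, k + 1 =>
    obtain ⟨a, ha⟩ := card_pos.1 (by omega : 0 < #s)
    have hcard : ∀ y ∈ s.erase a, #(s \ {a, y}) = m := fun y hy ↦ by
      obtain ⟨hya, hys⟩ := mem_erase.1 hy
      rw [card_sdiff_of_subset (insert_subset ha (singleton_subset_iff.2 hys)),
        card_pair (Ne.symm hya), hs, add_tsub_cancel_right]
    have herase : #(s.erase a) = m + 1 := by rw [card_erase_of_mem ha, hs]; rfl
    rw [card_assocPartitions_succ ha, ih (m + 1) (by omega) _ _ herase,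
      sum_congr rfl fun y hy ↦ ih m (by omega) _ _ (hcard y hy), sum_const, herase, smul_eq_mul]
    rfl

theorem assocStirling_eq_assocStirlingRec (m k : ℕ) : assocStirling m k = assocStirlingRec m k := by
  rw [assocStirling_eq_card_assocPartitions, card_assocPartitions, card_univ, Fintype.card_fin]

end Partitions

def secondOrderEulerian : ℕ → ℕ → ℤ
  | 0, 0 => 1
  | 0, _ + 1 => 0
  | _ + 1, 0 => 0
  | n + 1, k + 1 => (k + 1) * secondOrderEulerian n (k + 1) +
      (2 * (n + 1) - (k + 1)) * secondOrderEulerian n k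

theorem eq_secondOrderEulerian {B : ℕ → ℕ → ℤ} (h00 : B 0 0 = 1) (h0k : ∀ k, B 0 (k + 1) = 0)
    (hn0 : ∀ n, B (n + 1) 0 = 0 * B n 0)
    (hrec : ∀ n k : ℕ, B (n + 1) (k + 1) =
      ((k : ℤ) + 1) * B n (k + 1) + (2 * ((n : ℤ) + 1) - ((k : ℤ) + 1)) * B n k) :
    B = secondOrderEulerian := by
  ext n k
  induction n generalizing k with
  | zero => cases k <;> simp [secondOrderEulerian, h00, h0k]
  | succ n ih => cases k <;> simp [secondOrderEulerian, hn0, hrec, ih]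

theorem secondOrderEulerian_eq_zero_of_lt {n k : ℕ} (h : n < k) : secondOrderEulerian n k = 0 := by
  induction n generalizing k with
  | zero => obtain ⟨k, rfl⟩ := Nat.exists_eq_add_one_of_ne_zero (by omega : k ≠ 0); rfl
  | succ n ih =>
    obtain ⟨k, rfl⟩ := Nat.exists_eq_add_one_of_ne_zero (by omega : k ≠ 0)
    simp [secondOrderEulerian, ih (by omega : n < k + 1), ih (by omega : n < k)]

theorem sum_secondOrderEulerian_succ_mul (n : ℕ) (g : ℕ → ℤ) :
    ∑ j ∈ range (n + 2), secondOrderEulerian (n + 1) j * g j =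
      ∑ j ∈ range (n + 1), secondOrderEulerian n j * (j * g j + (2 * n + 1 - j) * g (j + 1)) := by
  have hshift : ∑ j ∈ range (n + 1), ((j : ℤ) + 1) * secondOrderEulerian n (j + 1) * g (j + 1) =
      ∑ j ∈ range (n + 1), (j : ℤ) * secondOrderEulerian n j * g j := by
    have h₁ := sum_range_succ' (fun j ↦ (j : ℤ) * secondOrderEulerian n j * g j) (n + 1)
    have h₂ := sum_range_succ (fun j ↦ (j : ℤ) * secondOrderEulerian n j * g j) (n + 1)
    rw [secondOrderEulerian_eq_zero_of_lt (Nat.lt_succ_self n)] at h₂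
    push_cast at h₁ h₂
    linarith
  calc ∑ j ∈ range (n + 2), secondOrderEulerian (n + 1) j * g j
      = ∑ j ∈ range (n + 1), (((j : ℤ) + 1) * secondOrderEulerian n (j + 1) * g (j + 1) +
          (2 * n + 1 - j) * secondOrderEulerian n j * g (j + 1)) := by
        rw [sum_range_succ']
        simp only [secondOrderEulerian, zero_mul, add_zero]
        exact sum_congr rfl fun j _ ↦ by ring
    _ = ∑ j ∈ range (n + 1), ((j : ℤ) * secondOrderEulerian n j * g j +
          (2 * n + 1 - j) * secondOrderEulerian n j * g (j + 1)) := by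
        rw [sum_add_distrib, sum_add_distrib, hshift]
    _ = _ := sum_congr rfl fun j _ ↦ by ring

theorem Nat.cast_choose_succ_right_eq (m e : ℕ) :
    (m.choose (e + 1) : ℤ) * (e + 1) = m.choose e * ((m : ℤ) - e) := by
  rcases le_or_gt e m with h | h
  · have := Nat.choose_succ_right_eq m e
    zify [h] at this
    exact this
  · simp [Nat.choose_eq_zero_of_lt h, Nat.choose_eq_zero_of_lt (Nat.lt_succ_of_lt h)]

def wardSum (n k : ℕ) : ℤ :=
  ∑ j ∈ range (n + 1), secondOrderEulerian n j * (n - j).choose (n - k)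

theorem wardSum_zero_zero : wardSum 0 0 = 1 := rfl

theorem wardSum_succ_zero (n : ℕ) : wardSum (n + 1) 0 = 0 := by
  refine sum_eq_zero fun j hj ↦ ?_
  cases j with
  | zero => simp [secondOrderEulerian]
  | succ j => simp [Nat.choose_eq_zero_of_lt (by omega : n - j < n + 1)]

theorem wardSum_succ_self (n : ℕ) : wardSum (n + 1) (n + 1) = (2 * n + 1) * wardSum n n := by
  have := sum_secondOrderEulerian_succ_mul n fun _ ↦ 1
  simp only [wardSum, Nat.sub_self, Nat.choose_zero_right, Nat.cast_one, mul_one] at this ⊢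
  rw [this, mul_sum]
  exact sum_congr rfl fun j _ ↦ by ring

theorem wardSum_succ_succ {n k : ℕ} (h : k < n) :
    wardSum (n + 1) (k + 1) = (k + 1) * wardSum n (k + 1) + (n + k + 1) * wardSum n k := by
  rw [wardSum, Nat.add_sub_add_right,
    sum_secondOrderEulerian_succ_mul n fun j ↦ ((n + 1 - j).choose (n - k) : ℤ), wardSum, wardSum,
    mul_sum, mul_sum, ← sum_add_distrib]
  refine sum_congr rfl fun j hj ↦ ?_
  have hj : j ≤ n := Nat.lt_succ_iff.1 (mem_range.1 hj)
  obtain ⟨e, he⟩ : ∃ e, n - k = e + 1 := ⟨n - (k + 1), by omega⟩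
  have hpascal := Nat.choose_succ_succ' (n - j) e
  have key := Nat.cast_choose_succ_right_eq (n - j) e
  rw [show n + 1 - j = n - j + 1 by omega, show n + 1 - (j + 1) = n - j by omega,
    show n - (k + 1) = e by omega, he, hpascal]
  rw [Nat.cast_sub hj, show (e : ℤ) = n - k - 1 by omega] at key
  push_cast
  linear_combination secondOrderEulerian n j * key

theorem assocStirlingRec_add_eq_wardSum {n k : ℕ} (h : k ≤ n) :
    (assocStirlingRec (n + k) k : ℤ) = wardSum n k := by
  induction n generalizing k with
  | zero =>
    obtain rfl : k = 0 := by omega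
    rfl
  | succ n ih =>
    cases k with
    | zero => rw [wardSum_succ_zero]; rfl
    | succ k =>
      rw [show n + 1 + (k + 1) = n + k + 2 by omega, assocStirlingRec]
      push_cast
      rcases (Nat.succ_le_succ_iff.1 h).lt_or_eq with hkn | rfl
      · rw [wardSum_succ_succ hkn, ← ih hkn, ← ih hkn.le]
        rfl
      · rw [assocStirlingRec_eq_zero_of_lt (by omega : k + k + 1 < 2 * (k + 1)), wardSum_succ_self,
          ← ih le_rfl]
        push_cast
        ring

/-- The Ward numbers, i.e. the associated Stirling subset numbers
`{n+k over k}_{≥2}`, satisfy `{n+k over k}_{≥2} = ∑_{j=0}^{k} B(n,j) C(n-j,n-k)`,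
where `B(n,k)` are the second-order Eulerian numbers with traditional indexing,
defined by `B(n,k) = k·B(n-1,k) + (2n-k)·B(n-1,k-1) + δ_{n0}δ_{k0}` (vanishing
for negative indices), and `C(n-j, n-k)` is understood to vanish when
`n - k < 0`. -/
theorem stmt14 (B : ℕ → ℕ → ℤ)
    (h00 : B 0 0 = 1) (h0k : ∀ k, B 0 (k + 1) = 0)
    (hn0 : ∀ n, B (n + 1) 0 = 0 * B n 0)
    (hrec : ∀ n k : ℕ, B (n + 1) (k + 1) =
      ((k : ℤ) + 1) * B n (k + 1) +
      (2 * ((n : ℤ) + 1) - ((k : ℤ) + 1)) * B n k)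
    (n k : ℕ) :
    (assocStirling (n + k) k : ℤ) = ∑ j ∈ Finset.range (k + 1),
      B n j * (if n < k then 0 else ((n - j).choose (n - k) : ℤ)) := by
  obtain rfl := eq_secondOrderEulerian h00 h0k hn0 hrec
  rw [assocStirling_eq_assocStirlingRec]
  rcases lt_or_ge n k with h | h
  · simp [h, assocStirlingRec_eq_zero_of_lt (by omega : n + k < 2 * k)]
  · simp only [h.not_gt, if_false]
    rw [assocStirlingRec_add_eq_wardSum h, wardSum]
    refine (sum_subset (range_subset_range.2 (by omega)) fun j hj hjk ↦ ?_).symm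
    rw [mem_range] at hj hjk
    rw [Nat.choose_eq_zero_of_lt (by omega), Nat.cast_zero, mul_zero]
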